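/- (A Liouvillian exceptional point without a Hamiltonian exceptional point.) Let ω > 0 and γ₋, γ_x, γ_y ≥ 0 satisfy (γ_x − γ_y)² = ω² (e.g., γ_x = γ_y ± ω), and let L(ρ) = −i[(ω/2)σ_z, ρ] + γ₋ D[σ₋]ρ + γ_x D[σ_x]ρ + γ_y D[σ_y]ρ on M₂(ℂ). Set λ = −γ₋/2 − γ_x − γ_y. Then (L − λ·id)(σ₊) = −iω σ₊ + (γ_x − γ_y) σ₋ ≠ 0 while (L − λ·id)²(σ₊) = 0; hence λ is a defective (second-order exceptional) eigenvalue of L and L is not diagonalizable, even though the associated non-Hermitian Hamiltonian (ω/2)σ_z − (i/2)(γ₋σ₊σ₋ + (γ_x+γ_y)·1) is diagonalizable with distinct eigenvalues. -/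
import Mathlib


open Matrix Complex

noncomputable section

def σx : Matrix (Fin 2) (Fin 2) ℂ := !![0, 1; 1, 0]
def σy : Matrix (Fin 2) (Fin 2) ℂ := !![0, -Complex.I; Complex.I, 0]
def σz : Matrix (Fin 2) (Fin 2) ℂ := !![1, 0; 0, -1]
def σp : Matrix (Fin 2) (Fin 2) ℂ := !![0, 1; 0, 0]
def σm : Matrix (Fin 2) (Fin 2) ℂ := !![0, 0; 1, 0]

/-- The Lindblad dissipator `D[Γ]ρ = ΓρΓᴴ − (1/2)(ΓᴴΓρ + ρΓᴴΓ)`. -/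
def dissip (Γ ρ : Matrix (Fin 2) (Fin 2) ℂ) : Matrix (Fin 2) (Fin 2) ℂ :=
  Γ * ρ * Γᴴ - (2⁻¹ : ℂ) • (Γᴴ * Γ * ρ + ρ * (Γᴴ * Γ))

/-- The two-level Liouvillian
`L(ρ) = −i[(ω/2)σ_z, ρ] + γ₋ D[σ₋]ρ + γ_x D[σ_x]ρ + γ_y D[σ_y]ρ`. -/
def Lqubit (ω γm γx γy : ℝ) (ρ : Matrix (Fin 2) (Fin 2) ℂ) :
    Matrix (Fin 2) (Fin 2) ℂ :=
  (-Complex.I) • (((ω : ℂ) / 2) • σz * ρ - ρ * (((ω : ℂ) / 2) • σz))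
    + (γm : ℂ) • dissip σm ρ + (γx : ℂ) • dissip σx ρ + (γy : ℂ) • dissip σy ρ

/-- The effective non-Hermitian Hamiltonian
`H_eff = (ω/2)σ_z − (i/2)(γ₋σ₊σ₋ + (γ_x + γ_y)·1)`. -/
def HeffQubit (ω γm γx γy : ℝ) : Matrix (Fin 2) (Fin 2) ℂ :=
  ((ω : ℂ) / 2) • σz
    - (Complex.I / 2) • ((γm : ℂ) • (σp * σm)
      + ((γx : ℂ) + (γy : ℂ)) • (1 : Matrix (Fin 2) (Fin 2) ℂ))

set_option maxHeartbeats 1000000 in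
/-- (A Liouvillian exceptional point without a Hamiltonian
exceptional point.) If `(γ_x − γ_y)² = ω²`, then with
`λ = −γ₋/2 − γ_x − γ_y` one has `(L − λ·id)(σ₊) = −iωσ₊ + (γ_x − γ_y)σ₋ ≠ 0`
while `(L − λ·id)²(σ₊) = 0`, so `λ` is a defective (second-order exceptional)
eigenvalue of `L`; yet the associated non-Hermitian Hamiltonian
`(ω/2)σ_z − (i/2)(γ₋σ₊σ₋ + (γ_x + γ_y)·1)` is diagonalizable with distinct
eigenvalues. -/
theorem LEP_without_HEP (ω γm γx γy : ℝ)
    (hω : 0 < ω) (hγm : 0 ≤ γm) (hγx : 0 ≤ γx) (hγy : 0 ≤ γy)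
    (hEP : (γx - γy) ^ 2 = ω ^ 2)
    (lam : ℂ) (hlam : lam = -(γm : ℂ) / 2 - γx - γy) :
    (Lqubit ω γm γx γy σp - lam • σp
        = (-(Complex.I * ω)) • σp + ((γx : ℂ) - γy) • σm) ∧
    ((-(Complex.I * ω)) • σp + ((γx : ℂ) - γy) • σm ≠ 0) ∧
    (Lqubit ω γm γx γy (Lqubit ω γm γx γy σp - lam • σp)
        - lam • (Lqubit ω γm γx γy σp - lam • σp) = 0) ∧
    (∃ (h₁ h₂ : ℂ) (v₁ v₂ : Fin 2 → ℂ),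
      h₁ ≠ h₂ ∧
      (HeffQubit ω γm γx γy).mulVec v₁ = h₁ • v₁ ∧
      (HeffQubit ω γm γx γy).mulVec v₂ = h₂ • v₂ ∧
      LinearIndependent ℂ ![v₁, v₂]) := by
  have hEPc : ((γx : ℂ) - γy) ^ 2 = (ω : ℂ) ^ 2 := by exact_mod_cast hEP
  have hωc : (ω : ℂ) ≠ 0 := by exact_mod_cast hω.ne'
  subst hlam
  have h1 : Lqubit ω γm γx γy σp - (-(γm : ℂ) / 2 - γx - γy) • σp
      = (-(Complex.I * ω)) • σp + ((γx : ℂ) - γy) • σm := by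
    ext i j
    fin_cases i <;> fin_cases j <;>
      simp [Lqubit, dissip, σx, σy, σz, σp, σm, Matrix.mul_apply,
        Fin.sum_univ_two, Matrix.conjTranspose_apply, Matrix.vecMul,
        dotProduct] <;> ring
  refine ⟨h1, ?_, ?_, ?_⟩
  · intro h
    have h01 := congrFun (congrFun h 0) 1
    simp [σp, σm] at h01
    exact hωc (by simpa [Complex.I_ne_zero] using h01)
  · rw [h1]
    ext i j
    fin_cases i <;> fin_cases j <;>
      simp [Lqubit, dissip, σx, σy, σz, σp, σm, Matrix.mul_apply,
        Fin.sum_univ_two, Matrix.conjTranspose_apply, Matrix.vecMul,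
        dotProduct]
    · linear_combination hEPc + ((ω:ℂ)^2 + γx*γy - γy^2) * Complex.I_sq
    · linear_combination (-(Complex.I*(ω:ℂ)*γy)) * Complex.I_sq
  · refine ⟨(ω : ℂ) / 2 - Complex.I / 2 * (γm + γx + γy),
      -(ω : ℂ) / 2 - Complex.I / 2 * (γx + γy), ![1, 0], ![0, 1], ?_, ?_, ?_, ?_⟩
    · intro h
      have h' := congrArg Complex.re h
      simp at h'
      nlinarith [hω]
    · ext i
      fin_cases i <;>
        simp [HeffQubit, σz, σp, σm, Matrix.mulVec, dotProduct,
          Fin.sum_univ_two, Matrix.mul_apply, Matrix.one_apply] <;> ring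
    · ext i
      fin_cases i <;>
        simp [HeffQubit, σz, σp, σm, Matrix.mulVec, dotProduct,
          Fin.sum_univ_two, Matrix.mul_apply, Matrix.one_apply] <;> ring
    · rw [linearIndependent_fin2]
      constructor
      · intro h
        have := congrFun h 1
        simp at this
      · intro a h
        have := congrFun h 0
        simp at this
end
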